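/- Let A₁, A₂, A₃ ∈ ℝ² be affinely independent, let T = conv{A₁,A₂,A₃} with each of its three interior angles at most π/2, let D be a point in the relative interior of the edge e₁ = [A₂,A₃] and E a point in the relative interior of the edge e₂ = [A₁,A₃], let K = conv{E,D,A₃}, and let t be a unit vector parallel to D − E. Then 0 ≤ ⟨(Πω)(x), t⟩ ≤ 1 for every x ∈ T, where ω is the piecewise field equal to t on K and 0 on T∖K and Πω is its Raviart–Thomas interpolant. -/

import Mathlib

open Real MeasureTheory RealInnerProductSpace

noncomputable section

abbrev V2 : Type := EuclideanSpace ℝ (Fin 2)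

/-- Area of the triangle `conv{A₁, A₂, A₃}`. -/
def triArea (A₁ A₂ A₃ : V2) : ℝ :=
  (volume (convexHull ℝ ({A₁, A₂, A₃} : Set V2))).toReal

/-- Standard lowest-order Raviart–Thomas basis function associated with the edge
opposite `A₁`: `λ₁(x) = (|e₁|/(2|T|))(x - A₁)`. -/
def lam1 (A₁ A₂ A₃ : V2) : V2 → V2 := fun x =>
  (‖A₃ - A₂‖ / (2 * triArea A₁ A₂ A₃)) • (x - A₁)

/-- `λ₂(x) = (|e₂|/(2|T|))(x - A₂)`. -/
def lam2 (A₁ A₂ A₃ : V2) : V2 → V2 := fun x =>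
  (‖A₃ - A₁‖ / (2 * triArea A₁ A₂ A₃)) • (x - A₂)

/-- The Raviart–Thomas interpolant `Πω = Σᵢ Nᵢ(ω) λᵢ` of the piecewise field `ω` equal to
`t` on `K = conv{E, D, A₃}` and `0` on `T∖K`, where `N₁(ω) = (|DA₃|/|e₁|)⟨t, n₁⟩`,
`N₂(ω) = (|EA₃|/|e₂|)⟨t, n₂⟩` and `N₃(ω) = 0`. -/
def piOmega (A₁ A₂ A₃ D E t n₁ n₂ : V2) : V2 → V2 := fun x =>
  ((‖A₃ - D‖ / ‖A₃ - A₂‖) * ⟪t, n₁⟫) • lam1 A₁ A₂ A₃ x +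
    ((‖A₃ - E‖ / ‖A₃ - A₁‖) * ⟪t, n₂⟫) • lam2 A₁ A₂ A₃ x

/-!
Write `D = (1-d) A₂ + d A₃`, `E = (1-e) A₁ + e A₃` and `Δ = (A₂ - A₁) × (A₃ - A₁)`. As `t ∥ D - E`
is tangent to the side `[E, D]` of `K`, the fluxes of `ω` through `e₁` and `e₂` cancel, and `Πω`
is the constant field `(1-d)(1-e) (|Δ| / 2|T|) (A₂ - A₁)`. Hence
`‖D - E‖² ⟨Πω, t⟩ = (1-d)(1-e) (|Δ| / 2|T|) ⟨A₂ - A₁, D - E⟩`, and since `|Δ| ≤ 2|T|` it remains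
to show `0 ≤ (1-d)(1-e) ⟨A₂ - A₁, D - E⟩ ≤ ‖D - E‖²`. This quadratic inequality in `d, e` holds
as soon as `0 ≤ ⟨A₂ - A₁, A₃ - A₁⟩ ≤ min ‖A₂ - A₁‖² ‖A₃ - A₁‖²`, i.e. when no angle of `T` is
obtuse.
-/

section NonobtuseTriangle

variable {F : Type*} [NormedAddCommGroup F] [InnerProductSpace ℝ F]

lemma inner_nonneg_of_angle_le_pi_div_two {x y : F}
    (h : InnerProductGeometry.angle x y ≤ π / 2) : 0 ≤ ⟪x, y⟫ := by
  rw [← InnerProductGeometry.cos_angle_mul_norm_mul_norm]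
  have := Real.cos_nonneg_of_mem_Icc
    ⟨by linarith [InnerProductGeometry.angle_nonneg x y, pi_pos], h⟩
  positivity

lemma inner_bounds_of_angle_le_pi_div_two {A₁ A₂ A₃ : F}
    (h₁ : EuclideanGeometry.angle A₂ A₁ A₃ ≤ π / 2)
    (h₂ : EuclideanGeometry.angle A₁ A₂ A₃ ≤ π / 2)
    (h₃ : EuclideanGeometry.angle A₁ A₃ A₂ ≤ π / 2) :
    0 ≤ ⟪A₂ - A₁, A₃ - A₁⟫ ∧ ⟪A₂ - A₁, A₃ - A₁⟫ ≤ ‖A₂ - A₁‖ ^ 2 ∧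
      ⟪A₂ - A₁, A₃ - A₁⟫ ≤ ‖A₃ - A₁‖ ^ 2 := by
  have k₁ := inner_nonneg_of_angle_le_pi_div_two h₁
  have k₂ := inner_nonneg_of_angle_le_pi_div_two h₂
  have k₃ := inner_nonneg_of_angle_le_pi_div_two h₃
  simp only [vsub_eq_sub] at k₁ k₂ k₃
  rw [← neg_sub A₂, ← sub_sub_sub_cancel_right A₃ A₂ A₁, inner_neg_left, inner_sub_right,
    real_inner_self_eq_norm_sq] at k₂
  rw [← neg_sub A₃, ← sub_sub_sub_cancel_right A₂ A₃ A₁, inner_neg_left, inner_sub_right,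
    real_inner_self_eq_norm_sq, real_inner_comm] at k₃
  exact ⟨k₁, by linarith, by linarith⟩

variable {p q : F} {d e : ℝ}

lemma inner_smul_add_smul_nonneg (hpq : 0 ≤ ⟪p, q⟫) (hp : ⟪p, q⟫ ≤ ‖p‖ ^ 2)
    (hd : d ≤ 1) (he : e ≤ 1) : 0 ≤ ⟪p, (1 - d) • p + (d - e) • q⟫ := by
  rw [inner_add_right, real_inner_smul_right, real_inner_smul_right, real_inner_self_eq_norm_sq]
  nlinarith [mul_nonneg (sub_nonneg.2 hd) (sub_nonneg.2 hp), mul_nonneg (sub_nonneg.2 he) hpq]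

lemma mul_inner_smul_add_smul_le_norm_sq (hpq : 0 ≤ ⟪p, q⟫) (hp : ⟪p, q⟫ ≤ ‖p‖ ^ 2)
    (hq : ⟪p, q⟫ ≤ ‖q‖ ^ 2) (hd : 0 ≤ d) (he : 0 ≤ e) :
    (1 - d) * (1 - e) * ⟪p, (1 - d) • p + (d - e) • q⟫ ≤ ‖(1 - d) • p + (d - e) • q‖ ^ 2 := by
  rw [← real_inner_self_eq_norm_sq]
  simp only [inner_add_left, inner_add_right, real_inner_smul_left, real_inner_smul_right,
    real_inner_comm p q]
  rw [real_inner_self_eq_norm_sq, real_inner_self_eq_norm_sq]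
  nlinarith [mul_nonneg (mul_nonneg (sq_nonneg (1 - d)) he) (sub_nonneg.2 hp),
    mul_nonneg (sq_nonneg (d - e)) (sub_nonneg.2 hq),
    mul_nonneg (mul_nonneg hpq hd) (sq_nonneg (1 - e))]

end NonobtuseTriangle

namespace RTInterpolant

def cross (u v : V2) : ℝ := u 0 * v 1 - u 1 * v 0

lemma inner_eq_coords (u v : V2) : ⟪u, v⟫ = u 0 * v 0 + u 1 * v 1 := by
  simp only [PiLp.inner_apply, Fin.sum_univ_two, RCLike.inner_apply, conj_trivial]
  ring

lemma norm_sq_eq_coords (u : V2) : ‖u‖ ^ 2 = u 0 ^ 2 + u 1 ^ 2 := by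
  rw [← real_inner_self_eq_norm_sq, inner_eq_coords]
  ring

lemma sq_inner_mul_norm_sq_eq_cross_sq {n w : V2} (p : V2) (hn : ‖n‖ = 1) (hnw : ⟪n, w⟫ = 0) :
    ⟪n, p⟫ ^ 2 * ‖w‖ ^ 2 = cross p w ^ 2 := by
  have hn' : n 0 ^ 2 + n 1 ^ 2 = 1 := by rw [← norm_sq_eq_coords, hn, one_pow]
  rw [inner_eq_coords] at hnw ⊢
  rw [norm_sq_eq_coords, cross]
  linear_combination ((p 0 * n 0 + p 1 * n 1) * (p 0 * w 0 + p 1 * w 1) +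
    (p 0 * w 1 - p 1 * w 0) * (p 1 * n 0 - p 0 * n 1)) * hnw + (p 0 * w 1 - p 1 * w 0) ^ 2 * hn'

lemma norm_mul_inner_eq_abs_cross {n w p : V2} (hn : ‖n‖ = 1) (hnw : ⟪n, w⟫ = 0)
    (hp : 0 ≤ ⟪n, p⟫) : ‖w‖ * ⟪n, p⟫ = |cross p w| := by
  rw [← sq_eq_sq₀ (by positivity) (abs_nonneg _), sq_abs,
    ← sq_inner_mul_norm_sq_eq_cross_sq p hn hnw]
  ring

def pairMap (p q : V2) : V2 →ₗ[ℝ] V2 where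
  toFun v := v 0 • p + v 1 • q
  map_add' u v := by simp only [PiLp.add_apply]; module
  map_smul' r v := by simp only [PiLp.smul_apply, smul_eq_mul, RingHom.id_apply]; module

lemma det_pairMap (p q : V2) : LinearMap.det (pairMap p q) = cross p q := by
  let b := (EuclideanSpace.basisFun (Fin 2) ℝ).toBasis
  have hmat : LinearMap.toMatrix b b (pairMap p q) = !![p 0, q 0; p 1, q 1] := by
    ext i j
    fin_cases i <;> fin_cases j <;> simp [LinearMap.toMatrix_apply, pairMap, b]
  rw [← LinearMap.det_toMatrix b, hmat, Matrix.det_fin_two_of, cross]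
  ring

def openStdTriangle : Set V2 := {v | 0 < v 0 ∧ 0 < v 1 ∧ v 0 + v 1 < 1}

lemma volume_openStdTriangle : volume openStdTriangle = ENNReal.ofReal (1 / 2) := by
  let F : V2 ≃ᵐ ℝ × ℝ :=
    (MeasurableEquiv.toLp 2 (Fin 2 → ℝ)).symm.trans MeasurableEquiv.finTwoArrow
  have hF : MeasurePreserving F volume volume :=
    (volume_preserving_finTwoArrow ℝ).comp
      (EuclideanSpace.volume_preserving_symm_measurableEquiv_toLp (Fin 2))
  have hpre : openStdTriangle =
      F ⁻¹' regionBetween (fun _ => 0) (fun x => 1 - x) (Set.Ioo 0 1) := by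
    ext v
    simp only [openStdTriangle, regionBetween, Set.mem_ofPred_eq, Set.mem_preimage, Set.mem_Ioo]
    change _ ↔ (0 < v 0 ∧ v 0 < 1) ∧ 0 < v 1 ∧ v 1 < 1 - v 0
    constructor <;> rintro ⟨h₁, h₂, h₃⟩ <;> refine ⟨?_, ?_, ?_⟩ <;> (try constructor) <;> linarith
  rw [hpre, hF.measure_preimage (measurableSet_regionBetween measurable_const (by fun_prop)
    measurableSet_Ioo).nullMeasurableSet, Measure.volume_eq_prod,
    volume_regionBetween_eq_integral (f := fun _ => 0) (g := fun x => 1 - x)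
      (integrableOn_const (by simp))
      ((Continuous.integrableOn_Icc (by fun_prop)).mono_set Set.Ioo_subset_Icc_self)
      measurableSet_Ioo (fun x hx => by linarith [hx.2]),
    ← integral_Ioc_eq_integral_Ioo, ← intervalIntegral.integral_of_le zero_le_one]
  simp only [Pi.sub_apply, sub_zero]
  rw [intervalIntegral.integral_sub intervalIntegrable_const intervalIntegral.intervalIntegrable_id]
  norm_num

lemma image_openStdTriangle_subset (A₁ A₂ A₃ : V2) :
    (fun v => A₁ + pairMap (A₂ - A₁) (A₃ - A₁) v) '' openStdTriangle ⊆
      convexHull ℝ {A₁, A₂, A₃} := by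
  rintro _ ⟨v, ⟨h₀, h₁, h₀₁⟩, rfl⟩
  have hmem := (convex_convexHull ℝ ({A₁, A₂, A₃} : Set V2)).sum_mem
    (t := Finset.univ) (w := ![1 - v 0 - v 1, v 0, v 1]) (z := ![A₁, A₂, A₃])
    (fun i _ => by
      fin_cases i <;> simp only [Fin.zero_eta, Fin.mk_one, Fin.reduceFinMk, Matrix.cons_val_zero,
        Matrix.cons_val_one, Matrix.cons_val] <;> linarith)
    (by
      simp only [Fin.sum_univ_three, Matrix.cons_val_zero, Matrix.cons_val_one, Matrix.cons_val]
      ring)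
    (fun i _ => subset_convexHull ℝ _ (by fin_cases i <;> simp))
  convert hmem using 1
  simp only [pairMap, LinearMap.coe_mk, AddHom.coe_mk, Fin.sum_univ_three, Fin.isValue,
    Matrix.cons_val_zero, Matrix.cons_val_one, Matrix.cons_val_two, Matrix.head_cons,
    Matrix.tail_cons]
  module

lemma abs_cross_le_two_mul_triArea (A₁ A₂ A₃ : V2) :
    |cross (A₂ - A₁) (A₃ - A₁)| ≤ 2 * triArea A₁ A₂ A₃ := by
  have hfin : volume (convexHull ℝ ({A₁, A₂, A₃} : Set V2)) ≠ ⊤ :=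
    ((Set.toFinite _).isCompact_convexHull ℝ).measure_lt_top.ne
  have himage : volume ((fun v => A₁ + pairMap (A₂ - A₁) (A₃ - A₁) v) '' openStdTriangle) =
      ENNReal.ofReal (|cross (A₂ - A₁) (A₃ - A₁)| / 2) := by
    rw [← Set.image_image (fun v => A₁ + v), Set.image_add_left, measure_preimage_add,
      Measure.addHaar_image_linearMap, det_pairMap, volume_openStdTriangle,
      ← ENNReal.ofReal_mul (abs_nonneg _)]
    ring_nf
  have hle := ENNReal.toReal_mono hfin (measure_mono (image_openStdTriangle_subset A₁ A₂ A₃))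
  rw [himage, ENNReal.toReal_ofReal (by positivity)] at hle
  rw [triArea]
  linarith

lemma abs_cross_div_two_mul_triArea_mem_Icc (A₁ A₂ A₃ : V2) :
    |cross (A₂ - A₁) (A₃ - A₁)| / (2 * triArea A₁ A₂ A₃) ∈ Set.Icc 0 1 :=
  have h := abs_cross_le_two_mul_triArea A₁ A₂ A₃
  ⟨div_nonneg (abs_nonneg _) ((abs_nonneg _).trans h),
    div_le_one_of_le₀ h ((abs_nonneg _).trans h)⟩

variable {A₁ A₂ A₃ D E n₁ n₂ : V2} {d e : ℝ}

lemma inner_sub_eq_of_inner_eq_zero₁ (hD : (1 - d) • A₂ + d • A₃ = D)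
    (hE : (1 - e) • A₁ + e • A₃ = E) (hn₁e : ⟪n₁, A₃ - A₂⟫ = 0) :
    ⟪n₁, D - E⟫ = (1 - e) * ⟪n₁, A₂ - A₁⟫ := by
  rw [← hD, ← hE, show (1 - d) • A₂ + d • A₃ - ((1 - e) • A₁ + e • A₃) =
    (1 - e) • (A₂ - A₁) + (d - e) • (A₃ - A₂) by module, inner_add_right,
    real_inner_smul_right, real_inner_smul_right, hn₁e, mul_zero, add_zero]

lemma inner_sub_eq_of_inner_eq_zero₂ (hD : (1 - d) • A₂ + d • A₃ = D)
    (hE : (1 - e) • A₁ + e • A₃ = E) (hn₂e : ⟪n₂, A₃ - A₁⟫ = 0) :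
    ⟪n₂, D - E⟫ = (1 - d) * ⟪n₂, A₂ - A₁⟫ := by
  rw [← hD, ← hE, show (1 - d) • A₂ + d • A₃ - ((1 - e) • A₁ + e • A₃) =
    (1 - d) • (A₂ - A₁) + (d - e) • (A₃ - A₁) by module, inner_add_right,
    real_inner_smul_right, real_inner_smul_right, hn₂e, mul_zero, add_zero]

lemma inner_piOmega_smul (t x : V2) (c : ℝ) :
    ⟪piOmega A₁ A₂ A₃ D E (c • t) n₁ n₂ x, c • t⟫ =
      c ^ 2 * ⟪piOmega A₁ A₂ A₃ D E t n₁ n₂ x, t⟫ := by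
  simp only [piOmega, real_inner_smul_left, inner_add_left, real_inner_smul_right]
  ring

lemma piOmega_sub_eq (hD : (1 - d) • A₂ + d • A₃ = D) (hE : (1 - e) • A₁ + e • A₃ = E)
    (hd : d ≤ 1) (he : e ≤ 1)
    (hn₁ : ‖n₁‖ = 1) (hn₁e : ⟪n₁, A₃ - A₂⟫ = 0) (hn₁o : ⟪n₁, A₁ - A₂⟫ ≤ 0)
    (hn₂ : ‖n₂‖ = 1) (hn₂e : ⟪n₂, A₃ - A₁⟫ = 0) (hn₂o : ⟪n₂, A₂ - A₁⟫ ≤ 0) (x : V2) :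
    piOmega A₁ A₂ A₃ D E (D - E) n₁ n₂ x =
      ((1 - d) * (1 - e) * (|cross (A₂ - A₁) (A₃ - A₁)| / (2 * triArea A₁ A₂ A₃))) •
        (A₂ - A₁) := by
  simp only [piOmega, lam1, lam2, smul_smul]
  set τ := triArea A₁ A₂ A₃
  set k := (1 - d) * (1 - e) * (|cross (A₂ - A₁) (A₃ - A₁)| / (2 * τ))
  have hcross₁ : ‖A₃ - A₂‖ * ⟪n₁, A₂ - A₁⟫ = |cross (A₂ - A₁) (A₃ - A₁)| := by
    rw [norm_mul_inner_eq_abs_cross hn₁ hn₁e (by rw [← neg_sub, inner_neg_right]; linarith)]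
    simp only [cross, PiLp.sub_apply]
    ring_nf
  have hcross₂ : ‖A₃ - A₁‖ * ⟪n₂, A₂ - A₁⟫ = -|cross (A₂ - A₁) (A₃ - A₁)| := by
    have h := norm_mul_inner_eq_abs_cross hn₂ hn₂e (p := A₁ - A₂)
      (by rw [← neg_sub, inner_neg_right]; linarith)
    rw [← neg_sub A₂ A₁, inner_neg_right, mul_neg, ← abs_neg] at h
    rw [← neg_eq_iff_eq_neg, h]
    simp only [cross, PiLp.sub_apply, PiLp.neg_apply]
    ring_nf
  have hD₃ : ‖A₃ - D‖ = (1 - d) * ‖A₃ - A₂‖ := by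
    rw [← hD, show A₃ - ((1 - d) • A₂ + d • A₃) = (1 - d) • (A₃ - A₂) by module, norm_smul,
      Real.norm_of_nonneg (sub_nonneg.2 hd)]
  have hE₃ : ‖A₃ - E‖ = (1 - e) * ‖A₃ - A₁‖ := by
    rw [← hE, show A₃ - ((1 - e) • A₁ + e • A₃) = (1 - e) • (A₃ - A₁) by module, norm_smul,
      Real.norm_of_nonneg (sub_nonneg.2 he)]
  have hcoeff₁ : ‖A₃ - D‖ / ‖A₃ - A₂‖ * ⟪D - E, n₁⟫ * (‖A₃ - A₂‖ / (2 * τ)) = k := by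
    rw [show ‖A₃ - D‖ / ‖A₃ - A₂‖ * ⟪D - E, n₁⟫ * (‖A₃ - A₂‖ / (2 * τ)) =
      ‖A₃ - D‖ / ‖A₃ - A₂‖ * ‖A₃ - A₂‖ * ⟪n₁, D - E⟫ / (2 * τ) by rw [real_inner_comm]; ring,
      div_mul_cancel_of_imp (fun h => by rw [hD₃, h, mul_zero]), hD₃,
      inner_sub_eq_of_inner_eq_zero₁ hD hE hn₁e]
    linear_combination (1 - d) * (1 - e) / (2 * τ) * hcross₁
  have hcoeff₂ : ‖A₃ - E‖ / ‖A₃ - A₁‖ * ⟪D - E, n₂⟫ * (‖A₃ - A₁‖ / (2 * τ)) = -k := by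
    rw [show ‖A₃ - E‖ / ‖A₃ - A₁‖ * ⟪D - E, n₂⟫ * (‖A₃ - A₁‖ / (2 * τ)) =
      ‖A₃ - E‖ / ‖A₃ - A₁‖ * ‖A₃ - A₁‖ * ⟪n₂, D - E⟫ / (2 * τ) by rw [real_inner_comm]; ring,
      div_mul_cancel_of_imp (fun h => by rw [hE₃, h, mul_zero]), hE₃,
      inner_sub_eq_of_inner_eq_zero₂ hD hE hn₂e]
    linear_combination (1 - d) * (1 - e) / (2 * τ) * hcross₂
  rw [hcoeff₁, hcoeff₂]
  module

end RTInterpolant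

open RTInterpolant in
theorem stmt3_general (A₁ A₂ A₃ D E t n₁ n₂ : V2)
    (hang1 : EuclideanGeometry.angle A₂ A₁ A₃ ≤ π / 2)
    (hang2 : EuclideanGeometry.angle A₁ A₂ A₃ ≤ π / 2)
    (hang3 : EuclideanGeometry.angle A₁ A₃ A₂ ≤ π / 2)
    (hD : D ∈ openSegment ℝ A₂ A₃) (hE : E ∈ openSegment ℝ A₁ A₃)
    (ht : ‖t‖ = 1) (htpar : ∃ c : ℝ, D - E = c • t)
    (hn₁ : ‖n₁‖ = 1) (hn₁e : ⟪n₁, A₃ - A₂⟫ = 0) (hn₁o : ⟪n₁, A₁ - A₂⟫ < 0)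
    (hn₂ : ‖n₂‖ = 1) (hn₂e : ⟪n₂, A₃ - A₁⟫ = 0) (hn₂o : ⟪n₂, A₂ - A₁⟫ < 0) :
    ∀ x ∈ convexHull ℝ ({A₁, A₂, A₃} : Set V2),
      0 ≤ ⟪piOmega A₁ A₂ A₃ D E t n₁ n₂ x, t⟫ ∧
        ⟪piOmega A₁ A₂ A₃ D E t n₁ n₂ x, t⟫ ≤ 1 := by
  intro x _
  rw [openSegment_eq_image] at hD hE
  obtain ⟨d, ⟨hd₀, hd₁⟩, hDd⟩ := hD
  obtain ⟨e, ⟨he₀, he₁⟩, hEe⟩ := hE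
  obtain ⟨c, hc⟩ := htpar
  obtain ⟨h₁, h₂, h₃⟩ := inner_bounds_of_angle_le_pi_div_two hang1 hang2 hang3
  obtain ⟨hr₀, hr₁⟩ := abs_cross_div_two_mul_triArea_mem_Icc A₁ A₂ A₃
  have hDE : D - E = (1 - d) • (A₂ - A₁) + (d - e) • (A₃ - A₁) := by
    rw [← hDd, ← hEe]; module
  have hlow := hDE ▸ inner_smul_add_smul_nonneg h₁ h₂ hd₁.le he₁.le
  have hup := hDE ▸ mul_inner_smul_add_smul_le_norm_sq h₁ h₂ h₃ hd₀.le he₀.le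
  have hflux := inner_sub_eq_of_inner_eq_zero₂ hDd hEe hn₂e
  have hDE₀ : 0 < ‖D - E‖ ^ 2 := by
    refine pow_pos (norm_pos_iff.2 fun h => ?_) 2
    rw [h, inner_zero_right] at hflux
    nlinarith
  have hval : ‖D - E‖ ^ 2 * ⟪piOmega A₁ A₂ A₃ D E t n₁ n₂ x, t⟫ =
      (1 - d) * (1 - e) * (|cross (A₂ - A₁) (A₃ - A₁)| / (2 * triArea A₁ A₂ A₃)) *
        ⟪A₂ - A₁, D - E⟫ := by
    rw [hc, norm_smul, ht, mul_one, Real.norm_eq_abs, sq_abs, ← inner_piOmega_smul, ← hc,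
      piOmega_sub_eq hDd hEe hd₁.le he₁.le hn₁ hn₁e hn₁o.le hn₂ hn₂e hn₂o.le, real_inner_smul_left]
  have hde : 0 ≤ (1 - d) * (1 - e) := mul_nonneg (by linarith) (by linarith)
  constructor <;> nlinarith [mul_nonneg hde hlow, mul_nonneg (mul_nonneg hde hlow) hr₀,
    mul_nonneg (mul_nonneg hde hlow) (sub_nonneg.2 hr₁)]

/-- Lemma 4.2 (lem_01) of the paper: `0 ≤ ⟨(Πω)(x), t⟩ ≤ 1` on the triangle, under the
maximum angle condition. -/
theorem stmt3 (A₁ A₂ A₃ D E t n₁ n₂ : V2)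
    (hA : AffineIndependent ℝ ![A₁, A₂, A₃])
    (hang1 : EuclideanGeometry.angle A₂ A₁ A₃ ≤ π / 2)
    (hang2 : EuclideanGeometry.angle A₁ A₂ A₃ ≤ π / 2)
    (hang3 : EuclideanGeometry.angle A₁ A₃ A₂ ≤ π / 2)
    (hD : D ∈ openSegment ℝ A₂ A₃) (hE : E ∈ openSegment ℝ A₁ A₃)
    (ht : ‖t‖ = 1) (htpar : ∃ c : ℝ, D - E = c • t)
    (hn₁ : ‖n₁‖ = 1) (hn₁e : ⟪n₁, A₃ - A₂⟫ = 0) (hn₁o : ⟪n₁, A₁ - A₂⟫ < 0)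
    (hn₂ : ‖n₂‖ = 1) (hn₂e : ⟪n₂, A₃ - A₁⟫ = 0) (hn₂o : ⟪n₂, A₂ - A₁⟫ < 0) :
    ∀ x ∈ convexHull ℝ ({A₁, A₂, A₃} : Set V2),
      0 ≤ ⟪piOmega A₁ A₂ A₃ D E t n₁ n₂ x, t⟫ ∧
        ⟪piOmega A₁ A₂ A₃ D E t n₁ n₂ x, t⟫ ≤ 1 :=
  stmt3_general A₁ A₂ A₃ D E t n₁ n₂ hang1 hang2 hang3 hD hE ht htpar hn₁ hn₁e hn₁o hn₂ hn₂e hn₂o
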